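/- Let k = 0 and let a be a regular scale factor with infinite particle horizon (∫_0^τ dt/a(t) = ∞). Then lim_{t₀→0⁺} a(t₀)·∫_{t₀}^τ dt/a(t) = lim_{t₀→0⁺} a(t₀)/a'(t₀) = 1/H(0⁺), which exists and is finite, where H(t) = a'(t)/a(t) is the (nonincreasing) Hubble parameter. -/

import Mathlib

/-!
Since `a(0) = 0`, `log a → -∞` at `0⁺`. The regularity condition makes `H = (log a)'`
nonincreasing, so `log a(1) - log a(t) ≤ (1 - t) H(t)` for `0 < t < 1`; hence `H(0⁺) = ∞` and
`a / a' = 1 / H → 0`. For the integral, `a(t₀) ∫_{t₀}^δ dt / a ≤ δ - t₀` because `a` is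
increasing, while `a(t₀) ∫_δ^τ dt / a → 0`; so this limit is `0` as well.
-/

open Set Filter MeasureTheory Topology

lemma MonotoneOn.deriv_nonneg_of_isOpen {a : ℝ → ℝ} {s : Set ℝ} (hmono : MonotoneOn a s)
    (hs : IsOpen s) {t : ℝ} (ht : t ∈ s) : 0 ≤ deriv a t := by
  rw [← derivWithin_of_isOpen hs ht]
  exact hmono.derivWithin_nonneg

/-- At a zero of `a'` the quotient `a a'' / a'^2` is `0` by convention, so the hypothesis says
nothing there; but `a' ≥ 0` has a local minimum at such a point, whence `a'' = 0`. -/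
lemma mul_deriv_deriv_le_deriv_sq {a : ℝ → ℝ} {s : Set ℝ} (hs : IsOpen s)
    (hd : ∀ t ∈ s, 0 ≤ deriv a t)
    (hreg : ∀ t ∈ s, a t * deriv (deriv a) t / deriv a t ^ 2 ≤ 1) {t : ℝ} (ht : t ∈ s) :
    a t * deriv (deriv a) t ≤ deriv a t ^ 2 := by
  rcases (hd t ht).eq_or_lt with hzero | hpos
  · have hmin : IsLocalMin (deriv a) t := by
      filter_upwards [hs.mem_nhds ht] with u hu
      exact hzero ▸ hd u hu
    simp [hmin.deriv_eq_zero, ← hzero]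
  · exact (div_le_one (by positivity)).1 (hreg t ht)

lemma antitoneOn_logDeriv_of_mul_deriv_deriv_le {a : ℝ → ℝ} {s : Set ℝ} (hconv : Convex ℝ s)
    (hs : IsOpen s) (hsmooth : ContDiffOn ℝ 2 a s) (hne : ∀ t ∈ s, a t ≠ 0)
    (hreg : ∀ t ∈ s, a t * deriv (deriv a) t ≤ deriv a t ^ 2) :
    AntitoneOn (logDeriv a) s := by
  have hd : ∀ t ∈ s, HasDerivAt a (deriv a t) t := fun t ht =>
    (hsmooth.differentiableOn two_ne_zero t ht |>.differentiableAt (hs.mem_nhds ht)).hasDerivAt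
  have hd' : ContDiffOn ℝ 1 (deriv a) s := hsmooth.deriv_of_isOpen hs (by norm_num)
  have hdd : ∀ t ∈ s, HasDerivAt (deriv a) (deriv (deriv a) t) t := fun t ht =>
    (hd'.differentiableOn one_ne_zero t ht |>.differentiableAt (hs.mem_nhds ht)).hasDerivAt
  have hH : ∀ t ∈ s, HasDerivAt (logDeriv a)
      ((deriv (deriv a) t * a t - deriv a t * deriv a t) / a t ^ 2) t := fun t ht =>
    (hdd t ht).div (hd t ht) (hne t ht)
  apply antitoneOn_of_deriv_nonpos hconv
  · exact fun t ht => (hH t ht).continuousAt.continuousWithinAt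
  · exact fun t ht => (hH t (interior_subset ht)).differentiableAt.differentiableWithinAt
  · intro t ht
    rw [hs.interior_eq] at ht
    rw [(hH t ht).deriv]
    exact div_nonpos_of_nonpos_of_nonneg (by nlinarith [hreg t ht]) (sq_nonneg _)

section LogDeriv

variable {a : ℝ → ℝ} (hpos : ∀ t > 0, 0 < a t) (hdiff : DifferentiableOn ℝ a (Ioi 0))
  (hanti : AntitoneOn (logDeriv a) (Ioi 0))
include hpos hdiff hanti

lemma log_sub_log_le_logDeriv_mul {t s : ℝ} (ht : 0 < t) (hts : t ≤ s) :
    Real.log (a s) - Real.log (a t) ≤ logDeriv a t * (s - t) := by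
  have hsub : Ici t ⊆ Ioi 0 := fun u hu => ht.trans_le hu
  have hdiff' : ∀ u ∈ Ici t, DifferentiableAt ℝ a u := fun u hu =>
    (hdiff u (hsub hu)).differentiableAt (isOpen_Ioi.mem_nhds (hsub hu))
  refine (convex_Ici t).image_sub_le_mul_sub_of_deriv_le (f := Real.log ∘ a) ?_ ?_ ?_
    t self_mem_Ici s hts hts
  · exact fun u hu => ((hdiff' u hu).continuousAt.log (hpos u (hsub hu)).ne').continuousWithinAt
  · rw [interior_Ici]
    exact fun u hu =>
      ((hdiff' u (mem_Ici.2 hu.le)).log (hpos u (hsub (mem_Ici.2 hu.le))).ne').differentiableWithinAt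
  · rw [interior_Ici]
    intro u hu
    have hu' : u ∈ Ici t := mem_Ici.2 hu.le
    rw [Real.deriv_log_comp_eq_logDeriv (hdiff' u hu') (hpos u (hsub hu')).ne']
    exact hanti ht (hsub hu') hu.le

lemma tendsto_logDeriv_nhdsGT_zero_atTop (hlim : Tendsto a (𝓝[>] 0) (𝓝 0)) :
    Tendsto (logDeriv a) (𝓝[>] 0) atTop := by
  have hlim' : Tendsto a (𝓝[>] 0) (𝓝[>] 0) :=
    tendsto_nhdsWithin_iff.2 ⟨hlim, eventually_nhdsWithin_of_forall hpos⟩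
  have hlog : Tendsto (fun t => Real.log (a 1) - Real.log (a t)) (𝓝[>] 0) atTop :=
    tendsto_atTop_add_const_left _ _
      (tendsto_neg_atBot_atTop.comp (Real.tendsto_log_nhdsGT_zero.comp hlim'))
  refine tendsto_atTop_mono' _ ?_ hlog
  filter_upwards [Ioo_mem_nhdsGT one_pos, hlog.eventually_ge_atTop 0] with t ht hnonneg
  have := log_sub_log_le_logDeriv_mul hpos hdiff hanti ht.1 ht.2.le
  nlinarith [ht.1, ht.2]

end LogDeriv

lemma integral_one_div_nonneg {a : ℝ → ℝ} (hpos : ∀ t > 0, 0 < a t) {x y : ℝ} (hx : 0 < x) (hxy : x ≤ y) :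
    0 ≤ ∫ t in x..y, 1 / a t :=
  intervalIntegral.integral_nonneg hxy fun t ht => (one_div_pos.2 (hpos t (hx.trans_le ht.1))).le

section Integral

variable {a : ℝ → ℝ} (hmono : MonotoneOn a (Ioi 0)) (hpos : ∀ t > 0, 0 < a t)
include hmono hpos

lemma intervalIntegrable_one_div_of_monotoneOn {x y : ℝ} (hx : 0 < x) (hy : 0 < y) :
    IntervalIntegrable (fun t => 1 / a t) volume x y := by
  refine AntitoneOn.intervalIntegrable fun u hu v hv huv => ?_
  have hu0 : 0 < u := lt_min hx hy |>.trans_le hu.1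
  have hv0 : 0 < v := lt_min hx hy |>.trans_le hv.1
  exact one_div_le_one_div_of_le (hpos u hu0) (hmono hu0 hv0 huv)

lemma mul_integral_one_div_le_sub {t₀ δ : ℝ} (ht₀ : 0 < t₀) (hδ : t₀ ≤ δ) :
    a t₀ * ∫ t in t₀..δ, 1 / a t ≤ δ - t₀ := by
  have hbound : ∫ t in t₀..δ, 1 / a t ≤ ∫ _ in t₀..δ, 1 / a t₀ := by
    refine intervalIntegral.integral_mono_on hδ
      (intervalIntegrable_one_div_of_monotoneOn hmono hpos ht₀ (ht₀.trans_le hδ))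
      intervalIntegrable_const fun t ht => ?_
    exact one_div_le_one_div_of_le (hpos t₀ ht₀) (hmono ht₀ (ht₀.trans_le ht.1) ht.1)
  calc a t₀ * ∫ t in t₀..δ, 1 / a t
      ≤ a t₀ * ∫ _ in t₀..δ, 1 / a t₀ := mul_le_mul_of_nonneg_left hbound (hpos t₀ ht₀).le
    _ = δ - t₀ := by
      rw [intervalIntegral.integral_const, smul_eq_mul]
      field_simp [(hpos t₀ ht₀).ne']

lemma tendsto_mul_integral_one_div_nhdsGT_zero {τ : ℝ} (hτ : 0 < τ)
    (hlim : Tendsto a (𝓝[>] 0) (𝓝 0)) :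
    Tendsto (fun t₀ => a t₀ * ∫ t in t₀..τ, 1 / a t) (𝓝[>] 0) (𝓝 0) := by
  refine tendsto_order.2 ⟨fun b hb => ?_, fun ε hε => ?_⟩
  · filter_upwards [Ioo_mem_nhdsGT hτ] with t₀ ht₀
    exact hb.trans_le <| mul_nonneg (hpos t₀ ht₀.1).le
      (integral_one_div_nonneg hpos ht₀.1 ht₀.2.le)
  set δ := min (ε / 2) τ
  have hδ : 0 < δ := lt_min (half_pos hε) hτ
  set C := ∫ t in δ..τ, 1 / a t
  have htail : Tendsto (fun t₀ => a t₀ * C) (𝓝[>] 0) (𝓝 0) := by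
    simpa using hlim.mul_const C
  filter_upwards [Ioo_mem_nhdsGT hδ, htail.eventually (gt_mem_nhds (half_pos hε))]
    with t₀ ht₀ hsmall
  have hsplit : ∫ t in t₀..τ, 1 / a t = (∫ t in t₀..δ, 1 / a t) + C :=
    (intervalIntegral.integral_add_adjacent_intervals
      (intervalIntegrable_one_div_of_monotoneOn hmono hpos ht₀.1 hδ)
      (intervalIntegrable_one_div_of_monotoneOn hmono hpos hδ hτ)).symm
  have hhead := mul_integral_one_div_le_sub hmono hpos ht₀.1 ht₀.2.le
  rw [hsplit, mul_add]
  linarith [min_le_left (ε / 2) τ, ht₀.1]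

end Integral

theorem infinite_particle_horizon_limit_general (a : ℝ → ℝ)
    (ha0 : a 0 = 0)
    (hmono : StrictMonoOn a (Set.Ici 0))
    (hcont : ContinuousOn a (Set.Ici 0))
    (hsmooth : ContDiffOn ℝ 2 a (Set.Ioi 0))
    (hreg : ∀ t > (0:ℝ), a t * deriv (deriv a) t / (deriv a t) ^ 2 ≤ 1)
    (τ : ℝ) (hτ : 0 < τ) :
    ∃ L : ℝ,
      Filter.Tendsto (fun t₀ => a t₀ / deriv a t₀)
        (nhdsWithin 0 (Set.Ioi 0)) (nhds L) ∧
      Filter.Tendsto (fun t₀ => a t₀ * ∫ t in t₀..τ, 1 / a t)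
        (nhdsWithin 0 (Set.Ioi 0)) (nhds L) := by
  have hmono' : MonotoneOn a (Ioi 0) := hmono.monotoneOn.mono Ioi_subset_Ici_self
  have hpos : ∀ t > 0, 0 < a t := fun t ht => ha0 ▸ hmono self_mem_Ici ht.le ht
  have hlim : Tendsto a (𝓝[>] 0) (𝓝 0) := by
    simpa only [ha0] using
      (hcont 0 self_mem_Ici).tendsto.mono_left (nhdsWithin_mono 0 Ioi_subset_Ici_self)
  have hanti : AntitoneOn (logDeriv a) (Ioi 0) :=
    antitoneOn_logDeriv_of_mul_deriv_deriv_le (convex_Ioi 0) isOpen_Ioi hsmooth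
      (fun t ht => (hpos t ht).ne') fun t ht =>
        mul_deriv_deriv_le_deriv_sq isOpen_Ioi
          (fun _ hs => hmono'.deriv_nonneg_of_isOpen isOpen_Ioi hs) hreg ht
  have hH := tendsto_logDeriv_nhdsGT_zero_atTop hpos (hsmooth.differentiableOn two_ne_zero)
    hanti hlim
  refine ⟨0, ?_, tendsto_mul_integral_one_div_nhdsGT_zero hmono' hpos hτ hlim⟩
  convert hH.inv_tendsto_atTop using 2 with t
  rw [Pi.inv_apply, logDeriv_apply, inv_div]

/-- For a regular scale factor with infinite particle horizon,
`a(t₀)·∫_{t₀}^τ dt/a(t)` and `a(t₀)/a'(t₀)` both converge to `1/H(0⁺)` as `t₀ → 0⁺`. -/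
theorem infinite_particle_horizon_limit (a : ℝ → ℝ)
    (ha0 : a 0 = 0)
    (hmono : StrictMonoOn a (Set.Ici 0))
    (hcont : ContinuousOn a (Set.Ici 0))
    (hsmooth : ContDiffOn ℝ 2 a (Set.Ioi 0))
    (hreg : ∀ t > (0:ℝ), a t * deriv (deriv a) t / (deriv a t) ^ 2 ≤ 1)
    (τ : ℝ) (hτ : 0 < τ)
    (hpart : ¬ MeasureTheory.IntegrableOn (fun t => 1 / a t) (Set.Ioc 0 τ)) :
    ∃ L : ℝ,
      Filter.Tendsto (fun t₀ => a t₀ / deriv a t₀)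
        (nhdsWithin 0 (Set.Ioi 0)) (nhds L) ∧
      Filter.Tendsto (fun t₀ => a t₀ * ∫ t in t₀..τ, 1 / a t)
        (nhdsWithin 0 (Set.Ioi 0)) (nhds L) :=
  infinite_particle_horizon_limit_general a ha0 hmono hcont hsmooth hreg τ hτ
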